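/- arXiv:1905.02515 — 3 statements merged into one kernel-verified Lean document; each statement's English description precedes it below -/
import Mathlib

section
/- The set of vectors of permutations allowed by a given set of tiles T forms a subgroup of the product group of permutation groups (it contains the identity, is closed under composition, and closed under inverses). -/
def AllowedBy {n m : ℕ} (P : Fin m → Equiv.Perm (Fin n))
    (t : Set (Fin n) × Set (Fin m)) : Prop :=
  ∀ i ∈ t.1, ∀ j ∈ t.2, ∀ j' ∈ t.2, P j i ∈ t.1 ∧ P j i = P j' i

theorem stmt3 {n m : ℕ} (T : Set (Set (Fin n) × Set (Fin m))) :
    ∃ S : Subgroup (Fin m → Equiv.Perm (Fin n)),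
      ∀ P : Fin m → Equiv.Perm (Fin n), P ∈ S ↔ (∀ t ∈ T, AllowedBy P t) := by
  refine ⟨{ carrier := {P | ∀ t ∈ T, AllowedBy P t}
            mul_mem' := ?_, one_mem' := ?_, inv_mem' := ?_}, fun P => Iff.rfl⟩
  · rintro P Q hP hQ t ht i hi j hj j' hj'
    obtain ⟨hQ1, hQ2⟩ := hQ t ht i hi j hj j' hj'
    obtain ⟨hP1, hP2⟩ := hP t ht _ hQ1 j hj j' hj'
    exact ⟨hP1, by simp only [Pi.mul_apply, Equiv.Perm.mul_apply]; rw [← hQ2, hP2, hQ2]⟩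
  · intro t ht i hi j hj j' hj'; exact ⟨hi, rfl⟩
  · intro P hP t ht
    -- first: each P j restricted to t.1 is a bijection of t.1
    have hbij : ∀ j ∈ t.2, Set.BijOn (P j) t.1 t.1 := by
      intro j hj
      have hm : Set.MapsTo (P j) t.1 t.1 := fun i hi => (hP t ht i hi j hj j hj).1
      exact (Set.Finite.injOn_iff_bijOn_of_mapsTo (Set.toFinite t.1) hm).mp
        (Set.injOn_of_injective (P j).injective)
    intro i hi j hj j' hj'
    obtain ⟨a, ha, hpa⟩ := (hbij j hj).surjOn hi
    obtain ⟨a', ha', hpa'⟩ := (hbij j' hj').surjOn hi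
    have h1 : P⁻¹ j i = a := by
      simp only [Pi.inv_apply, ← hpa, Equiv.Perm.inv_def, Equiv.symm_apply_apply]
    have heq : P j a' = i := by rw [(hP t ht a' ha' j hj j' hj').2, hpa']
    have h2 : P⁻¹ j' i = a' := by
      simp only [Pi.inv_apply, ← hpa', Equiv.Perm.inv_def, Equiv.symm_apply_apply]
    have : a = a' := (P j).injective (by rw [hpa, heq])
    exact ⟨h1 ▸ ha, by rw [h1, h2, this]⟩
end

section
/- Given two overlapping tiles t_1 = (R_1, C_1) and t_2 = (R_2, C_2), the set of three tiles {(R_1 \ R_2, C_1), (R_1 ∩ R_2, C_1 ∪ C_2), (R_2 \ R_1, C_2)} is equivalent to {t_1, t_2}: a vector of permutations is allowed by both t_1 and t_2 if and only if it is allowed by all three new tiles. -/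
/-! A column `j₀ ∈ C₁ ∩ C₂` shared by the two tiles decides everything: on each row set the
permutations of a tile agree with `P j₀`, and `P j₀` maps both `R₁` and `R₂` into themselves.
Since an injective self-map of a finite set is onto it, `P j₀` also maps the complement of `R₂`
into itself, so rows of `R₁ \ R₂` never enter `R₂`. Conversely `R₁` is covered by the two
pieces `R₁ \ R₂` and `R₁ ∩ R₂`, each allowing all the columns of `C₁`. -/

theorem Set.MapsTo.mem_of_apply_mem {α : Type*} {f : α → α} {s : Set α} (hs : s.Finite)
    (hf : Function.Injective f) (h : Set.MapsTo f s s) {x : α} (hx : f x ∈ s) : x ∈ s := by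
  obtain ⟨y, hy, hyx⟩ := ((hs.injOn_iff_bijOn_of_mapsTo h).mp hf.injOn).surjOn hx
  rwa [← hf hyx]

namespace AllowedBy

variable {n m : ℕ} {P : Fin m → Equiv.Perm (Fin n)} {R S : Set (Fin n)} {C D : Set (Fin m)}

theorem mapsTo (h : AllowedBy P (R, C)) {j : Fin m} (hj : j ∈ C) : Set.MapsTo (P j) R R :=
  fun i hi => (h i hi j hj j hj).1

theorem eq (h : AllowedBy P (R, C)) {i : Fin n} (hi : i ∈ R) {j j' : Fin m} (hj : j ∈ C)
    (hj' : j' ∈ C) : P j i = P j' i :=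
  (h i hi j hj j' hj').2

theorem mono_right (h : AllowedBy P (R, D)) (hCD : C ⊆ D) : AllowedBy P (R, C) :=
  fun i hi j hj j' hj' => h i hi j (hCD hj) j' (hCD hj')

theorem union_left (hR : AllowedBy P (R, C)) (hS : AllowedBy P (S, C)) :
    AllowedBy P (R ∪ S, C) := by
  rintro i (hi | hi) j hj j' hj'
  · exact ⟨Or.inl (hR i hi j hj j' hj').1, (hR i hi j hj j' hj').2⟩
  · exact ⟨Or.inr (hS i hi j hj j' hj').1, (hS i hi j hj j' hj').2⟩

theorem diff (hR : AllowedBy P (R, C)) (hS : AllowedBy P (S, D)) {j₀ : Fin m} (hC : j₀ ∈ C)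
    (hD : j₀ ∈ D) : AllowedBy P (R \ S, C) := by
  rintro i ⟨hiR, hiS⟩ j hj j' hj'
  refine ⟨⟨hR.mapsTo hj hiR, fun hjS => hiS ?_⟩, hR.eq hiR hj hj'⟩
  rw [hR.eq hiR hj hC] at hjS
  exact (hS.mapsTo hD).mem_of_apply_mem S.toFinite (P j₀).injective hjS

theorem inter_union (hR : AllowedBy P (R, C)) (hS : AllowedBy P (S, D)) {j₀ : Fin m}
    (hC : j₀ ∈ C) (hD : j₀ ∈ D) : AllowedBy P (R ∩ S, C ∪ D) := by
  rintro i ⟨hiR, hiS⟩ j hj j' hj'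
  have agree : ∀ k ∈ C ∪ D, P k i = P j₀ i := by
    rintro k (hk | hk)
    exacts [hR.eq hiR hk hC, hS.eq hiS hk hD]
  rw [agree j hj, agree j' hj']
  exact ⟨⟨hR.mapsTo hC hiR, hS.mapsTo hD hiS⟩, rfl⟩

theorem of_diff_of_inter (hdiff : AllowedBy P (R \ S, C)) (hinter : AllowedBy P (R ∩ S, D))
    (hCD : C ⊆ D) : AllowedBy P (R, C) := by
  rw [← Set.sdiff_union_inter R S]
  exact hdiff.union_left (hinter.mono_right hCD)

end AllowedBy

theorem stmt4 {n m : ℕ} (P : Fin m → Equiv.Perm (Fin n))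
    (R1 R2 : Set (Fin n)) (C1 C2 : Set (Fin m))
    (hoverlap : ((R1 ×ˢ C1) ∩ (R2 ×ˢ C2)).Nonempty) :
    (AllowedBy P (R1, C1) ∧ AllowedBy P (R2, C2)) ↔
      (AllowedBy P (R1 \ R2, C1) ∧ AllowedBy P (R1 ∩ R2, C1 ∪ C2) ∧
        AllowedBy P (R2 \ R1, C2)) := by
  obtain ⟨⟨_, j₀⟩, ⟨-, hj₁⟩, -, hj₂⟩ := hoverlap
  constructor
  · rintro ⟨h1, h2⟩
    exact ⟨h1.diff h2 hj₁ hj₂, h1.inter_union h2 hj₁ hj₂, h2.diff h1 hj₂ hj₁⟩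
  · rintro ⟨h12, hinter, h21⟩
    have hinter' : AllowedBy P (R2 ∩ R1, C1 ∪ C2) := by rwa [Set.inter_comm]
    exact ⟨h12.of_diff_of_inter hinter Set.subset_union_left,
      h21.of_diff_of_inter hinter' Set.subset_union_right⟩
end

section
/- For any finite set of (possibly overlapping) tiles T, there exists a tiling (a set of pairwise non-overlapping tiles) that is equivalent to T, i.e., allows exactly the same vectors of permutations. -/
def Overlap {n m : ℕ} (t1 t2 : Set (Fin n) × Set (Fin m)) : Prop :=
  ((t1.1 ×ˢ t1.2) ∩ (t2.1 ×ˢ t2.2)).Nonempty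

/-! ### Auxiliary material -/

abbrev Tile (n m : ℕ) := Set (Fin n) × Set (Fin m)

def cellsOf {n m : ℕ} (t : Tile n m) : Set (Fin n × Fin m) := t.1 ×ˢ t.2

/-- The set of "overlap incidences" of a family of tiles: a cell together with an
ordered pair of distinct tiles both containing it. -/
def Ov {n m : ℕ} (T : Set (Tile n m)) :
    Set ((Fin n × Fin m) × Tile n m × Tile n m) :=
  {x | x.2.1 ∈ T ∧ x.2.2 ∈ T ∧ x.2.1 ≠ x.2.2 ∧ x.1 ∈ cellsOf x.2.1 ∧ x.1 ∈ cellsOf x.2.2}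

lemma forward_s1 {n m : ℕ} {P : Fin m → Equiv.Perm (Fin n)}
    {R1 R2 : Set (Fin n)} {C1 C2 : Set (Fin m)} {j0 : Fin m}
    (hj01 : j0 ∈ C1) (hj02 : j0 ∈ C2)
    (hA1 : AllowedBy P (R1, C1)) (hA2 : AllowedBy P (R2, C2)) :
    AllowedBy P (R1 ∩ R2, C1 ∪ C2) := by
  intro i hi j hj j' hj'
  have key : ∀ k ∈ C1 ∪ C2, P k i ∈ R1 ∩ R2 ∧ P k i = P j0 i := by
    intro k hk
    rcases hk with hk | hk
    · obtain ⟨h₁, h₂⟩ := hA1 i hi.1 k hk j0 hj01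
      have h₃ := (hA2 i hi.2 j0 hj02 j0 hj02).1
      exact ⟨⟨h₁, h₂ ▸ h₃⟩, h₂⟩
    · obtain ⟨h₁, h₂⟩ := hA2 i hi.2 k hk j0 hj02
      have h₃ := (hA1 i hi.1 j0 hj01 j0 hj01).1
      exact ⟨⟨h₂ ▸ h₃, h₁⟩, h₂⟩
  obtain ⟨ha, hb⟩ := key j hj
  exact ⟨ha, hb.trans (key j' hj').2.symm⟩

lemma forward_s2 {n m : ℕ} {P : Fin m → Equiv.Perm (Fin n)}
    {R1 R2 : Set (Fin n)} {C1 C2 : Set (Fin m)} {j0 : Fin m}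
    (hj01 : j0 ∈ C1) (hj02 : j0 ∈ C2)
    (hA1 : AllowedBy P (R1, C1)) (hA2 : AllowedBy P (R2, C2)) :
    AllowedBy P (R1 \ R2, C1) := by
  intro i hi j hj j' hj'
  obtain ⟨hmem, heq⟩ := hA1 i hi.1 j hj j' hj'
  refine ⟨⟨hmem, ?_⟩, heq⟩
  intro hPmem
  have hmt : Set.MapsTo (P j) (R1 ∩ R2) (R1 ∩ R2) := by
    intro x hx
    obtain ⟨hx1, hx2⟩ := hA1 x hx.1 j hj j0 hj01
    have hx3 := (hA2 x hx.2 j0 hj02 j0 hj02).1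
    exact ⟨hx1, hx2 ▸ hx3⟩
  have hbij := ((Set.toFinite (R1 ∩ R2)).injOn_iff_bijOn_of_mapsTo hmt).mp
    ((P j).injective.injOn)
  obtain ⟨x, hx, hxe⟩ := hbij.surjOn (⟨hmem, hPmem⟩ : P j i ∈ R1 ∩ R2)
  have : x = i := (P j).injective hxe
  exact hi.2 (this ▸ hx.2)

lemma backward_t1 {n m : ℕ} {P : Fin m → Equiv.Perm (Fin n)}
    {R1 R2 : Set (Fin n)} {C1 C2 : Set (Fin m)}
    (hA1 : AllowedBy P (R1 ∩ R2, C1 ∪ C2)) (hA2 : AllowedBy P (R1 \ R2, C1)) :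
    AllowedBy P (R1, C1) := by
  intro i hi j hj j' hj'
  by_cases h : i ∈ R2
  · obtain ⟨h₁, h₂⟩ := hA1 i ⟨hi, h⟩ j (Or.inl hj) j' (Or.inl hj')
    exact ⟨h₁.1, h₂⟩
  · obtain ⟨h₁, h₂⟩ := hA2 i ⟨hi, h⟩ j hj j' hj'
    exact ⟨h₁.1, h₂⟩

lemma measure_lt {n m : ℕ} {T : Set (Tile n m)} {t1 t2 : Tile n m}
    (h1 : t1 ∈ T) (h2 : t2 ∈ T) (hne : t1 ≠ t2) {c0 : Fin n × Fin m}
    (hc01 : c0 ∈ cellsOf t1) (hc02 : c0 ∈ cellsOf t2) :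
    (Ov ((T \ {t1, t2}) ∪
      {(t1.1 ∩ t2.1, t1.2 ∪ t2.2), (t1.1 \ t2.1, t1.2), (t2.1 \ t1.1, t2.2)})).ncard
      < (Ov T).ncard := by
  classical
  set s1 : Tile n m := (t1.1 ∩ t2.1, t1.2 ∪ t2.2) with hs1
  set s2 : Tile n m := (t1.1 \ t2.1, t1.2) with hs2
  set s3 : Tile n m := (t2.1 \ t1.1, t2.2) with hs3
  set T2 := (T \ {t1, t2}) ∪ {s1, s2, s3} with hT2def
  have hsub : ∀ a, a = s1 ∨ a = s2 ∨ a = s3 → ∀ c : Fin n × Fin m,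
      c ∈ cellsOf a → c ∈ cellsOf t1 ∨ c ∈ cellsOf t2 := by
    rintro a (rfl | rfl | rfl) c hc <;>
      · simp only [cellsOf, hs1, hs2, hs3, Set.mem_prod, Set.mem_inter_iff,
          Set.mem_diff, Set.mem_union] at hc ⊢
        tauto
  have hdisj : ∀ (c : Fin n × Fin m) (a b : Tile n m),
      (a = s1 ∨ a = s2 ∨ a = s3) → (b = s1 ∨ b = s2 ∨ b = s3) →
      c ∈ cellsOf a → c ∈ cellsOf b → a = b := by
    rintro c a b (rfl | rfl | rfl) (rfl | rfl | rfl) ha hb <;>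
      first
        | rfl
        | (exfalso
           simp only [cellsOf, hs1, hs2, hs3, Set.mem_prod, Set.mem_inter_iff,
             Set.mem_diff, Set.mem_union] at ha hb
           tauto)
  let r : Tile n m → (Fin n × Fin m) → Tile n m := fun a c =>
    if a = s1 ∨ a = s2 ∨ a = s3 then (if c ∈ cellsOf t1 then t1 else t2) else a
  let φ : (Fin n × Fin m) × Tile n m × Tile n m →
      (Fin n × Fin m) × Tile n m × Tile n m :=
    fun x => (x.1, r x.2.1 x.1, r x.2.2 x.1)
  have hr_new : ∀ (a : Tile n m) (c : Fin n × Fin m),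
      (a = s1 ∨ a = s2 ∨ a = s3) → c ∈ cellsOf a →
      (r a c = t1 ∧ c ∈ cellsOf t1) ∨ (r a c = t2 ∧ c ∈ cellsOf t2 ∧ c ∉ cellsOf t1) := by
    intro a c hnew hc
    by_cases hct : c ∈ cellsOf t1
    · exact Or.inl ⟨by simp only [r, if_pos hnew, if_pos hct], hct⟩
    · exact Or.inr ⟨by simp only [r, if_pos hnew, if_neg hct],
        (hsub a hnew c hc).resolve_left hct, hct⟩
  have hr_old : ∀ (a : Tile n m) (c : Fin n × Fin m),
      ¬(a = s1 ∨ a = s2 ∨ a = s3) → r a c = a := fun a c h => if_neg h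
  have hold_mem : ∀ a ∈ T2, ¬(a = s1 ∨ a = s2 ∨ a = s3) →
      a ∈ T ∧ a ≠ t1 ∧ a ≠ t2 := by
    intro a ha hnot
    rcases ha with ha | ha
    · exact ⟨ha.1, fun h => ha.2 (by simp [h]), fun h => ha.2 (by simp [h])⟩
    · exact absurd (by simpa using ha) hnot
  have hr_prop : ∀ a ∈ T2, ∀ c : Fin n × Fin m, c ∈ cellsOf a →
      r a c ∈ T ∧ c ∈ cellsOf (r a c) := by
    intro a ha c hc
    by_cases hnew : a = s1 ∨ a = s2 ∨ a = s3
    · rcases hr_new a c hnew hc with ⟨he, hm⟩ | ⟨he, hm, _⟩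
      · rw [he]; exact ⟨h1, hm⟩
      · rw [he]; exact ⟨h2, hm⟩
    · rw [hr_old a c hnew]
      exact ⟨(hold_mem a ha hnew).1, hc⟩
  have hcore : ∀ a ∈ T2, ∀ b ∈ T2, ∀ c : Fin n × Fin m,
      c ∈ cellsOf a → c ∈ cellsOf b → r a c = r b c → a = b := by
    intro a ha b hb c hca hcb he
    by_cases hna : a = s1 ∨ a = s2 ∨ a = s3 <;>
      by_cases hnb : b = s1 ∨ b = s2 ∨ b = s3
    · exact hdisj c a b hna hnb hca hcb
    · exfalso
      obtain ⟨_, hbt1, hbt2⟩ := hold_mem b hb hnb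
      rw [hr_old b c hnb] at he
      rcases hr_new a c hna hca with ⟨hea, _⟩ | ⟨hea, _, _⟩
      · exact hbt1 (by rw [← he, hea])
      · exact hbt2 (by rw [← he, hea])
    · exfalso
      obtain ⟨_, hat1, hat2⟩ := hold_mem a ha hna
      rw [hr_old a c hna] at he
      rcases hr_new b c hnb hcb with ⟨heb, _⟩ | ⟨heb, _, _⟩
      · exact hat1 (by rw [he, heb])
      · exact hat2 (by rw [he, heb])
    · rw [hr_old a c hna, hr_old b c hnb] at he; exact he
  have hinj : Set.InjOn φ (Ov T2) := by
    rintro ⟨c, a, b⟩ ⟨haT, hbT, hab, hca, hcb⟩ ⟨c', a', b'⟩ ⟨haT', hbT', hab', hca', hcb'⟩ heq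
    simp only [φ, Prod.mk.injEq] at heq
    obtain ⟨rfl, hra, hrb⟩ := heq
    simp only [Prod.mk.injEq]
    exact ⟨trivial, hcore a haT a' haT' c hca hca' hra, hcore b hbT b' hbT' c hcb hcb' hrb⟩
  have himg : φ '' Ov T2 ⊆ Ov T \ {(c0, t1, t2)} := by
    rintro _ ⟨⟨c, a, b⟩, ⟨haT, hbT, hab, hca, hcb⟩, rfl⟩
    obtain ⟨hra, hcra⟩ := hr_prop a haT c hca
    obtain ⟨hrb, hcrb⟩ := hr_prop b hbT c hcb
    refine ⟨⟨hra, hrb, ?_, hcra, hcrb⟩, ?_⟩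
    · intro he
      exact hab (hcore a haT b hbT c hca hcb he)
    · intro he
      simp only [φ, Set.mem_singleton_iff, Prod.mk.injEq] at he
      obtain ⟨hc, hta, htb⟩ := he
      by_cases hna : a = s1 ∨ a = s2 ∨ a = s3
      · by_cases hnb : b = s1 ∨ b = s2 ∨ b = s3
        · rcases hr_new a c hna hca with ⟨hea, hcm⟩ | ⟨hea, _, _⟩
          · rcases hr_new b c hnb hcb with ⟨heb, _⟩ | ⟨_, _, hnc⟩
            · exact hne (by rw [← heb, htb])
            · exact hnc hcm
          · exact hne (by rw [← hta, hea])
        · obtain ⟨_, _, hbt2⟩ := hold_mem b hbT hnb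
          rw [hr_old b c hnb] at htb
          exact hbt2 htb
      · obtain ⟨_, hat1, _⟩ := hold_mem a haT hna
        rw [hr_old a c hna] at hta
        exact hat1 hta
  have hx0 : (c0, t1, t2) ∈ Ov T := ⟨h1, h2, hne, hc01, hc02⟩
  calc (Ov T2).ncard = (φ '' Ov T2).ncard := (Set.ncard_image_of_injOn hinj).symm
    _ ≤ ((Ov T) \ {(c0, t1, t2)}).ncard := Set.ncard_le_ncard himg (Set.toFinite _)
    _ < (Ov T).ncard := Set.ncard_diff_singleton_lt_of_mem hx0 (Set.toFinite _)

lemma main_aux {n m : ℕ} : ∀ (N : ℕ) (T : Set (Tile n m)), T.Finite →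
    (Ov T).ncard ≤ N →
    ∃ T' : Set (Tile n m),
      (∀ t1 ∈ T', ∀ t2 ∈ T', t1 ≠ t2 → ¬ Overlap t1 t2) ∧
      (∀ P : Fin m → Equiv.Perm (Fin n),
        (∀ t ∈ T, AllowedBy P t) ↔ (∀ t ∈ T', AllowedBy P t)) := by
  intro N
  induction N with
  | zero =>
    intro T hT hle
    refine ⟨T, ?_, fun P => Iff.rfl⟩
    intro t1 h1 t2 h2 hne hov
    obtain ⟨c0, hc01, hc02⟩ := hov
    have hmem : (c0, t1, t2) ∈ Ov T := ⟨h1, h2, hne, hc01, hc02⟩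
    have hpos : 0 < (Ov T).ncard :=
      (Set.ncard_pos (Set.toFinite _)).mpr ⟨_, hmem⟩
    omega
  | succ N ih =>
    intro T hT hle
    by_cases hex : ∃ t1 ∈ T, ∃ t2 ∈ T, t1 ≠ t2 ∧ Overlap t1 t2
    · obtain ⟨t1, h1, t2, h2, hne, hov⟩ := hex
      obtain ⟨c0, hc01, hc02⟩ := hov
      set T2 := (T \ {t1, t2}) ∪
        {(t1.1 ∩ t2.1, t1.2 ∪ t2.2), (t1.1 \ t2.1, t1.2), (t2.1 \ t1.1, t2.2)} with hT2def
      have hlt := measure_lt h1 h2 hne hc01 hc02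
      rw [← hT2def] at hlt
      have hfin : T2.Finite := hT.diff.union (Set.toFinite _)
      obtain ⟨T', hT'1, hT'2⟩ := ih T2 hfin (by omega)
      refine ⟨T', hT'1, fun P => ?_⟩
      rw [← hT'2 P]
      have hs1mem : (t1.1 ∩ t2.1, t1.2 ∪ t2.2) ∈ T2 := by
        rw [hT2def]; exact Set.mem_union_right _ (by simp)
      have hs2mem : (t1.1 \ t2.1, t1.2) ∈ T2 := by
        rw [hT2def]; exact Set.mem_union_right _ (by simp)
      have hs3mem : (t2.1 \ t1.1, t2.2) ∈ T2 := by
        rw [hT2def]; exact Set.mem_union_right _ (by simp)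
      constructor
      · intro hall t ht
        rw [hT2def] at ht
        rcases ht with ht | ht
        · exact hall t ht.1
        · have hA1 : AllowedBy P (t1.1, t1.2) := hall t1 h1
          have hA2 : AllowedBy P (t2.1, t2.2) := hall t2 h2
          simp only [Set.mem_insert_iff, Set.mem_singleton_iff] at ht
          rcases ht with rfl | rfl | rfl
          · exact forward_s1 hc01.2 hc02.2 hA1 hA2
          · exact forward_s2 hc01.2 hc02.2 hA1 hA2
          · exact forward_s2 hc02.2 hc01.2 hA2 hA1
      · intro hall t ht
        by_cases he1 : t = t1
        · rw [he1]
          have hA1 := hall _ hs1mem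
          have hA2 := hall _ hs2mem
          exact backward_t1 hA1 hA2
        by_cases he2 : t = t2
        · rw [he2]
          have hA1 := hall _ hs1mem
          have hA3 := hall _ hs3mem
          have hA1' : AllowedBy P (t2.1 ∩ t1.1, t2.2 ∪ t1.2) := by
            rw [Set.inter_comm, Set.union_comm]; exact hA1
          exact backward_t1 hA1' hA3
        · exact hall t (by rw [hT2def]; exact Set.mem_union_left _ ⟨ht, by simp [he1, he2]⟩)
    · exact ⟨T, fun t1 h1 t2 h2 hne hov => hex ⟨t1, h1, t2, h2, hne, hov⟩,
        fun P => Iff.rfl⟩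

theorem stmt5 {n m : ℕ} (T : Set (Set (Fin n) × Set (Fin m))) (hT : T.Finite) :
    ∃ T' : Set (Set (Fin n) × Set (Fin m)),
      (∀ t1 ∈ T', ∀ t2 ∈ T', t1 ≠ t2 → ¬ Overlap t1 t2) ∧
      (∀ P : Fin m → Equiv.Perm (Fin n),
        (∀ t ∈ T, AllowedBy P t) ↔ (∀ t ∈ T', AllowedBy P t)) :=
  main_aux (Ov T).ncard T hT le_rfl
end
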